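/- (Lemma 1: noise tolerance under symmetric label noise.) Suppose c1 ≤ Σ_{i=1}^{k} ψ(g(x), i) ≤ c2 holds for μ-almost every x and for g ∈ {f, f*}, that f* is a clean-risk minimizer in the sense that Δ := R_ψ(f*) − R_ψ(f) ≤ 0, that c2 − c1 − kΔ > 0, and that the noise rate satisfies 0 ≤ η < ((1−k)·Δ)/(c2 − c1 − kΔ). Then R^η_ψ(f*) ≤ R^η_ψ(f), i.e., f* also minimizes the risk under symmetric label noise relative to f. -/
import Mathlib


open MeasureTheory Finset

/-- The clean ψ-risk: expected loss under the clean data distribution. -/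
noncomputable def cleanRisk {X : Type*} [MeasurableSpace X] {k : ℕ}
    (μ : Measure (X × Fin k)) (ψ : (Fin k → ℝ) → Fin k → ℝ) (g : X → Fin k → ℝ) : ℝ :=
  ∫ p, ψ (g p.1) p.2 ∂μ

/-- The ψ-risk under symmetric (uniform) label noise with noise rate η. -/
noncomputable def noisyRisk {X : Type*} [MeasurableSpace X] {k : ℕ}
    (μ : Measure (X × Fin k)) (ψ : (Fin k → ℝ) → Fin k → ℝ) (g : X → Fin k → ℝ)
    (η : ℝ) : ℝ :=
  ∫ p, ((1 - η) * ψ (g p.1) p.2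
      + (η / ((k : ℝ) - 1)) * ∑ i ∈ Finset.univ.erase p.2, ψ (g p.1) i) ∂μ

lemma intY {X : Type*} [MeasurableSpace X] {k : ℕ}
    (μ : Measure (X × Fin k)) (ψ : (Fin k → ℝ) → Fin k → ℝ) (g : X → Fin k → ℝ)
    (hint : ∀ i : Fin k, Integrable (fun p : X × Fin k => ψ (g p.1) i) μ) :
    Integrable (fun p : X × Fin k => ψ (g p.1) p.2) μ := by
  have : (fun p : X × Fin k => ψ (g p.1) p.2)
      = fun p => ∑ i : Fin k, ({q : X × Fin k | q.2 = i}).indicator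
        (fun q => ψ (g q.1) i) p := by
    funext p
    rw [Finset.sum_eq_single p.2]
    · simp [Set.indicator_apply]
    · intro i _ hi
      simp only [Set.indicator_apply]
      rw [if_neg]
      exact fun h => hi h.symm
    · simp
  rw [this]
  refine integrable_finset_sum _ fun i _ => (hint i).indicator ?_
  exact (measurable_snd (MeasurableSet.singleton i))

lemma noisyRisk_eq {X : Type*} [MeasurableSpace X] {k : ℕ}
    (μ : Measure (X × Fin k)) (ψ : (Fin k → ℝ) → Fin k → ℝ) (g : X → Fin k → ℝ)
    (η : ℝ)
    (hint : ∀ i : Fin k, Integrable (fun p : X × Fin k => ψ (g p.1) i) μ) :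
    noisyRisk μ ψ g η = (1 - η - η / ((k : ℝ) - 1)) * cleanRisk μ ψ g
      + (η / ((k : ℝ) - 1)) * ∫ p, (∑ i : Fin k, ψ (g p.1) i) ∂μ := by
  have hY := intY μ ψ g hint
  have hS : Integrable (fun p : X × Fin k => ∑ i : Fin k, ψ (g p.1) i) μ :=
    integrable_finset_sum _ fun i _ => hint i
  have key : ∀ p : X × Fin k,
      (1 - η) * ψ (g p.1) p.2
        + (η / ((k : ℝ) - 1)) * ∑ i ∈ Finset.univ.erase p.2, ψ (g p.1) i
      = (1 - η - η / ((k : ℝ) - 1)) * ψ (g p.1) p.2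
        + (η / ((k : ℝ) - 1)) * ∑ i : Fin k, ψ (g p.1) i := by
    intro p
    have : ∑ i ∈ Finset.univ.erase p.2, ψ (g p.1) i
        = (∑ i : Fin k, ψ (g p.1) i) - ψ (g p.1) p.2 := by
      rw [Finset.sum_erase_eq_sub (Finset.mem_univ _)]
    rw [this]; ring
  unfold noisyRisk cleanRisk
  simp_rw [key]
  rw [integral_add (hY.const_mul _) (hS.const_mul _), MeasureTheory.integral_const_mul, MeasureTheory.integral_const_mul]

/-- Lemma 1: noise tolerance under symmetric label noise.
If the per-point loss sums are a.e. bounded in [c1, c2], f* is a clean-risk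
minimizer (Δ = R_ψ(f*) − R_ψ(f) ≤ 0), c2 − c1 − kΔ > 0, and
0 ≤ η < (1−k)Δ/(c2 − c1 − kΔ), then R^η_ψ(f*) ≤ R^η_ψ(f). -/
theorem noise_tolerance_symmetric {X : Type*} [MeasurableSpace X] {k : ℕ} (hk : 2 ≤ k)
    (μ : Measure (X × Fin k)) [IsProbabilityMeasure μ]
    (f fstar : X → Fin k → ℝ) (ψ : (Fin k → ℝ) → Fin k → ℝ)
    (hintf : ∀ i : Fin k, Integrable (fun p : X × Fin k => ψ (f p.1) i) μ)
    (hintfstar : ∀ i : Fin k, Integrable (fun p : X × Fin k => ψ (fstar p.1) i) μ)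
    (c1 c2 : ℝ)
    (hboundf : ∀ᵐ p ∂μ, c1 ≤ ∑ i, ψ (f p.1) i ∧ ∑ i, ψ (f p.1) i ≤ c2)
    (hboundfstar : ∀ᵐ p ∂μ, c1 ≤ ∑ i, ψ (fstar p.1) i ∧ ∑ i, ψ (fstar p.1) i ≤ c2)
    (Δ : ℝ) (hΔdef : Δ = cleanRisk μ ψ fstar - cleanRisk μ ψ f) (hΔ : Δ ≤ 0)
    (hdenom : 0 < c2 - c1 - (k : ℝ) * Δ)
    (η : ℝ) (hη0 : 0 ≤ η) (hη1 : η < ((1 - (k : ℝ)) * Δ) / (c2 - c1 - (k : ℝ) * Δ)) :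
    noisyRisk μ ψ fstar η ≤ noisyRisk μ ψ f η := by
  have hK : (2:ℝ) ≤ (k:ℝ) := by exact_mod_cast hk
  have hk1 : (0:ℝ) < (k:ℝ) - 1 := by linarith
  have hSf : Integrable (fun p : X × Fin k => ∑ i : Fin k, ψ (f p.1) i) μ :=
    integrable_finset_sum _ fun i _ => hintf i
  have hSs : Integrable (fun p : X × Fin k => ∑ i : Fin k, ψ (fstar p.1) i) μ :=
    integrable_finset_sum _ fun i _ => hintfstar i
  set Sf := ∫ p, (∑ i : Fin k, ψ (f p.1) i) ∂μ with hSfdef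
  set Ss := ∫ p, (∑ i : Fin k, ψ (fstar p.1) i) ∂μ with hSsdef
  have hSfge : c1 ≤ Sf := by
    have : ∫ _p : X × Fin k, c1 ∂μ ≤ Sf :=
      integral_mono_ae (integrable_const c1) hSf (hboundf.mono fun p hp => hp.1)
    simpa using this
  have hSsle : Ss ≤ c2 := by
    have : Ss ≤ ∫ _p : X × Fin k, c2 ∂μ :=
      integral_mono_ae hSs (integrable_const c2) (hboundfstar.mono fun p hp => hp.2)
    simpa using this
  rw [noisyRisk_eq μ ψ f η hintf, noisyRisk_eq μ ψ fstar η hintfstar]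
  have hmul : η * (c2 - c1 - (k:ℝ) * Δ) < (1 - (k:ℝ)) * Δ :=
    (lt_div_iff₀ hdenom).mp hη1
  have hb : 0 ≤ η / ((k:ℝ) - 1) := div_nonneg hη0 (le_of_lt hk1)
  have hbound : η / ((k:ℝ) - 1) * (Ss - Sf) ≤ η / ((k:ℝ) - 1) * (c2 - c1) := by
    apply mul_le_mul_of_nonneg_left (by linarith) hb
  have heq : η / ((k:ℝ) - 1) * ((k:ℝ) - 1) = η := by field_simp
  have h1 : η / ((k:ℝ) - 1) * (c2 - c1 - (k:ℝ) * Δ) ≤ -Δ := by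
    rw [div_mul_eq_mul_div, div_le_iff₀ hk1]
    nlinarith
  have h2 : η / ((k:ℝ) - 1) * (((k:ℝ) - 1) * Δ) = η * Δ := by
    rw [← mul_assoc, heq]
  have hRs : cleanRisk μ ψ fstar = cleanRisk μ ψ f + Δ := by linarith
  rw [hRs]
  nlinarith [h1, h2, hbound]
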